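/- arXiv:1705.07276 — 3 statements merged into one kernel-verified Lean document; each statement's English description precedes it below -/
import Mathlib

section
/- Let H be a pencilled hfd line set in PG(5,K). Then for every vertex v of H there is exactly one plane κ with v ≤ κ such that the pencil L[v,κ] is contained in H, and this unique plane κ = h(v) satisfies L[v, h(v)] = { X ∈ H : v ≤ X }. Consequently the map h from the set of vertices of H to the set of carrier planes of H is well defined and surjective. -/
/-- The Klein quadratic form on `K^6`. -/
def kleinQ {K : Type*} [Field K] (x : Fin 6 → K) : K :=
  x 0 * x 1 + x 2 * x 3 + x 4 * x 5

/-- The polar bilinear form `B(x,y) = Q(x+y) - Q(x) - Q(y)`. -/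
def kleinB {K : Type*} [Field K] (x y : Fin 6 → K) : K :=
  kleinQ (x + y) - kleinQ x - kleinQ y

/-- The polar subspace `π₅(S)` of a subspace `S`. -/
def kleinPolar {K : Type*} [Field K] (S : Submodule K (Fin 6 → K)) :
    Submodule K (Fin 6 → K) where
  carrier := {y | ∀ s ∈ S, kleinB s y = 0}
  add_mem' := by
    intro a b ha hb s hs
    have h1 := ha s hs
    have h2 := hb s hs
    simp only [kleinB, kleinQ, Pi.add_apply] at *
    linear_combination h1 + h2
  zero_mem' := by
    intro s hs
    simp [kleinB, kleinQ]
  smul_mem' := by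
    intro c a ha s hs
    have h1 := ha s hs
    simp only [kleinB, kleinQ, Pi.add_apply, Pi.smul_apply, smul_eq_mul] at *
    linear_combination c * h1

/-- `τ` is a tangent hyperplane of the Klein quadric. -/
def IsTangentHyperplane {K : Type*} [Field K] (τ : Submodule K (Fin 6 → K)) : Prop :=
  ∃ x : Fin 6 → K, x ≠ 0 ∧ kleinQ x = 0 ∧ τ = kleinPolar (Submodule.span K {x})

/-- A subspace is external to the Klein quadric. -/
def IsExternal {K : Type*} [Field K] (S : Submodule K (Fin 6 → K)) : Prop :=
  ∀ s ∈ S, s ≠ 0 → kleinQ s ≠ 0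

/-- A `0`-secant of the Klein quadric: an external line. -/
def IsSecant {K : Type*} [Field K] (G : Submodule K (Fin 6 → K)) : Prop :=
  Module.finrank K G = 2 ∧ IsExternal G

/-- The pencil of lines with vertex `v` and carrier plane `κ`. -/
def pencil {K : Type*} [Field K] (v κ : Submodule K (Fin 6 → K)) :
    Set (Submodule K (Fin 6 → K)) :=
  {X | Module.finrank K X = 2 ∧ v ≤ X ∧ X ≤ κ}

/-- An hfd line set: a set of `0`-secants such that every tangent hyperplane
contains exactly one member. -/
def IsHfd {K : Type*} [Field K] (H : Set (Submodule K (Fin 6 → K))) : Prop :=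
  (∀ G ∈ H, IsSecant G) ∧
    ∀ τ : Submodule K (Fin 6 → K), IsTangentHyperplane τ → ∃! G, G ∈ H ∧ G ≤ τ

/-- A pencilled hfd line set: every member lies in a pencil entirely contained in `H`. -/
def IsPencilledHfd {K : Type*} [Field K] (H : Set (Submodule K (Fin 6 → K))) : Prop :=
  IsHfd H ∧
    ∀ G ∈ H, ∃ v κ : Submodule K (Fin 6 → K), Module.finrank K v = 1 ∧
      Module.finrank K κ = 3 ∧ v ≤ κ ∧ pencil v κ ⊆ H ∧ G ∈ pencil v κ

/-- `v` is a vertex of the pencilled hfd line set `H`. -/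
def IsVertex {K : Type*} [Field K] (H : Set (Submodule K (Fin 6 → K)))
    (v : Submodule K (Fin 6 → K)) : Prop :=
  Module.finrank K v = 1 ∧ ∃ κ : Submodule K (Fin 6 → K),
    Module.finrank K κ = 3 ∧ v ≤ κ ∧ pencil v κ ⊆ H

/-- `κ` is a carrier plane of the pencilled hfd line set `H`. -/
def IsCarrier {K : Type*} [Field K] (H : Set (Submodule K (Fin 6 → K)))
    (κ : Submodule K (Fin 6 → K)) : Prop :=
  Module.finrank K κ = 3 ∧ ∃ v : Submodule K (Fin 6 → K),
    Module.finrank K v = 1 ∧ v ≤ κ ∧ pencil v κ ⊆ H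

/-!
Every line of `PG(5,K)` lies in a tangent hyperplane: the polar of the line is a solid, and it
meets the totally singular plane `x₁ = x₃ = x₅ = 0`. Let `L[v,κ] ⊆ H` and let `X ∈ H` pass
through `v`. A tangent hyperplane `τ ⊇ X` meets the plane `κ` in at least a line, so `τ`
contains a line `Y` of `L[v,κ]`; as `τ` contains only one member of `H`, `X = Y ≤ κ`. Hence
`L[v,κ] = {X ∈ H : v ≤ X}`, and this set determines `κ` as the span of its lines.
-/

open Module Submodule

section Lines

variable {K V : Type*} [Field K] [AddCommGroup V] [Module K V] [FiniteDimensional K V]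

theorem exists_finrank_eq_two_between {v U : Submodule K V} (hv : finrank K v = 1)
    (hvU : v ≤ U) (hU : 2 ≤ finrank K U) :
    ∃ Y : Submodule K V, finrank K Y = 2 ∧ v ≤ Y ∧ Y ≤ U := by
  obtain ⟨w, hwU, hwv⟩ :=
    SetLike.exists_of_lt (lt_of_le_of_finrank_lt_finrank hvU (by omega))
  exact ⟨v ⊔ span K {w}, by rw [finrank_sup_span_singleton hwv, hv], le_sup_left,
    sup_le hvU ((span_singleton_le_iff_mem _ _).mpr hwU)⟩

end Lines

section Pencil

variable {K : Type*} [Field K]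

theorem le_of_pencil_subset {v κ κ' : Submodule K (Fin 6 → K)} (hv : finrank K v = 1)
    (hvκ : v ≤ κ) (hvκ' : v ≤ κ') (h : pencil v κ ⊆ pencil v κ') : κ ≤ κ' := by
  intro w hw
  by_cases hwv : w ∈ v
  · exact hvκ' hwv
  have hline : v ⊔ span K {w} ∈ pencil v κ :=
    ⟨by rw [finrank_sup_span_singleton hwv, hv], le_sup_left,
      sup_le hvκ ((span_singleton_le_iff_mem _ _).mpr hw)⟩
  exact (h hline).2.2 (mem_sup_right (mem_span_singleton_self w))

theorem eq_of_pencil_eq {v κ κ' : Submodule K (Fin 6 → K)} (hv : finrank K v = 1)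
    (hvκ : v ≤ κ) (hvκ' : v ≤ κ') (h : pencil v κ = pencil v κ') : κ = κ' :=
  le_antisymm (le_of_pencil_subset hv hvκ hvκ' h.le) (le_of_pencil_subset hv hvκ' hvκ h.ge)

end Pencil

section Klein

variable {K : Type*} [Field K]

theorem kleinB_eq (x y : Fin 6 → K) :
    kleinB x y = x 0 * y 1 + x 1 * y 0 + x 2 * y 3 + x 3 * y 2 + x 4 * y 5 + x 5 * y 4 := by
  simp only [kleinB, kleinQ, Pi.add_apply]
  ring

variable (K) in
def kleinBilin : (Fin 6 → K) →ₗ[K] (Fin 6 → K) →ₗ[K] K :=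
  LinearMap.mk₂ K kleinB
    (fun _ _ _ => by simp only [kleinB_eq, Pi.add_apply]; ring)
    (fun _ _ _ => by simp only [kleinB_eq, Pi.smul_apply, smul_eq_mul]; ring)
    (fun _ _ _ => by simp only [kleinB_eq, Pi.add_apply]; ring)
    (fun _ _ _ => by simp only [kleinB_eq, Pi.smul_apply, smul_eq_mul]; ring)

@[simp]
theorem kleinBilin_apply (x y : Fin 6 → K) : kleinBilin K x y = kleinB x y := rfl

theorem kleinPolar_span_singleton (x : Fin 6 → K) :
    kleinPolar (span K {x}) = LinearMap.ker (kleinBilin K x) := by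
  ext y
  simp only [LinearMap.mem_ker, kleinBilin_apply]
  refine ⟨fun h => h x (mem_span_singleton_self x), fun h s hs => ?_⟩
  obtain ⟨c, rfl⟩ := mem_span_singleton.mp hs
  rw [← kleinBilin_apply, LinearMap.map_smul₂, kleinBilin_apply, h, smul_zero]

theorem IsTangentHyperplane.five_le_finrank {τ : Submodule K (Fin 6 → K)}
    (hτ : IsTangentHyperplane τ) : 5 ≤ finrank K τ := by
  obtain ⟨x, -, -, rfl⟩ := hτ
  have hrank := LinearMap.finrank_range_add_finrank_ker (kleinBilin K x)
  have hrange : finrank K (LinearMap.range (kleinBilin K x)) ≤ 1 :=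
    (finrank_le _).trans_eq (finrank_self K)
  rw [finrank_fin_fun] at hrank
  rw [kleinPolar_span_singleton]
  omega

variable (K) in
def singularPlane : (Fin 3 → K) →ₗ[K] (Fin 6 → K) where
  toFun c := ![c 0, 0, c 1, 0, c 2, 0]
  map_add' a b := by ext i; fin_cases i <;> simp
  map_smul' r a := by ext i; fin_cases i <;> simp

theorem kleinQ_singularPlane (c : Fin 3 → K) : kleinQ (singularPlane K c) = 0 := by
  simp [singularPlane, kleinQ]

theorem singularPlane_injective : Function.Injective (singularPlane K) := by
  intro a b h
  ext i
  fin_cases i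
  exacts [congrFun h 0, congrFun h 2, congrFun h 4]

theorem exists_tangentHyperplane_ge {X : Submodule K (Fin 6 → K)} (hX : finrank K X ≤ 2) :
    ∃ τ, IsTangentHyperplane τ ∧ X ≤ τ := by
  let f := (kleinBilin K).domRestrict₂ X ∘ₗ singularPlane K
  have hker : LinearMap.ker f ≠ ⊥ := LinearMap.ker_ne_bot_of_finrank_lt <| by
    rw [finrank_linearMap_self, finrank_fin_fun]
    omega
  obtain ⟨c, hc, hc0⟩ := (Submodule.ne_bot_iff _).mp hker
  refine ⟨_, ⟨singularPlane K c, ?_, kleinQ_singularPlane c, rfl⟩, fun y hy => ?_⟩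
  · exact (map_ne_zero_iff _ singularPlane_injective).mpr hc0
  · rw [kleinPolar_span_singleton, LinearMap.mem_ker]
    simpa [f, LinearMap.domRestrict₂_apply] using
      LinearMap.congr_fun (LinearMap.mem_ker.mp hc) ⟨y, hy⟩

end Klein

section Hfd

variable {K : Type*} [Field K] {H : Set (Submodule K (Fin 6 → K))}

theorem IsHfd.le_of_pencil_subset (hH : IsHfd H) {v κ X : Submodule K (Fin 6 → K)}
    (hv : finrank K v = 1) (hκ : finrank K κ = 3) (hvκ : v ≤ κ) (hsub : pencil v κ ⊆ H)
    (hX : X ∈ H) (hvX : v ≤ X) : X ≤ κ := by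
  obtain ⟨τ, hτ, hXτ⟩ := exists_tangentHyperplane_ge (hH.1 X hX).1.le
  have hκτ : 2 ≤ finrank K ↥(κ ⊓ τ) := by
    have hsum := finrank_sup_add_finrank_inf_eq κ τ
    have hsup := (finrank_le (κ ⊔ τ)).trans_eq (finrank_fin_fun K)
    have := hτ.five_le_finrank
    omega
  obtain ⟨Y, hY, hvY, hYκτ⟩ :=
    exists_finrank_eq_two_between hv (le_inf hvκ (hvX.trans hXτ)) hκτ
  have hYH : Y ∈ H := hsub ⟨hY, hvY, hYκτ.trans inf_le_left⟩
  have hXY : X = Y := (hH.2 τ hτ).unique ⟨hX, hXτ⟩ ⟨hYH, hYκτ.trans inf_le_right⟩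
  exact hXY ▸ hYκτ.trans inf_le_left

theorem IsHfd.pencil_eq (hH : IsHfd H) {v κ : Submodule K (Fin 6 → K)}
    (hv : finrank K v = 1) (hκ : finrank K κ = 3) (hvκ : v ≤ κ) (hsub : pencil v κ ⊆ H) :
    pencil v κ = {X | X ∈ H ∧ v ≤ X} := by
  ext X
  exact ⟨fun hX => ⟨hsub hX, hX.2.1⟩, fun ⟨hXH, hvX⟩ =>
    ⟨(hH.1 X hXH).1, hvX, hH.le_of_pencil_subset hv hκ hvκ hsub hXH hvX⟩⟩

end Hfd

/-- Main Theorem, part (b).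
For every vertex `v` of a pencilled hfd line set `H` there is exactly one plane `κ`
through `v` whose pencil `L[v,κ]` is contained in `H`; this unique plane satisfies
`L[v,κ] = {X ∈ H : v ≤ X}`; and the resulting map `h` from vertices to carrier
planes is surjective. -/
theorem vertex_unique_plane {K : Type*} [Field K]
    (H : Set (Submodule K (Fin 6 → K))) (hH : IsPencilledHfd H) :
    (∀ v : Submodule K (Fin 6 → K), IsVertex H v →
      ∃! κ : Submodule K (Fin 6 → K),
        Module.finrank K κ = 3 ∧ v ≤ κ ∧ pencil v κ ⊆ H) ∧
    (∀ v κ : Submodule K (Fin 6 → K), IsVertex H v →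
      Module.finrank K κ = 3 → v ≤ κ → pencil v κ ⊆ H →
        pencil v κ = {X | X ∈ H ∧ v ≤ X}) ∧
    (∀ κ : Submodule K (Fin 6 → K), IsCarrier H κ →
      ∃ v : Submodule K (Fin 6 → K),
        IsVertex H v ∧ v ≤ κ ∧ pencil v κ ⊆ H) := by
  obtain ⟨hHfd, -⟩ := hH
  refine ⟨?_, fun v κ hv hκ hvκ hsub => hHfd.pencil_eq hv.1 hκ hvκ hsub, ?_⟩
  · rintro v ⟨hv, κ, hκ, hvκ, hsub⟩
    refine ⟨κ, ⟨hκ, hvκ, hsub⟩, fun κ' ⟨hκ', hvκ', hsub'⟩ => eq_of_pencil_eq hv hvκ' hvκ ?_⟩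
    rw [hHfd.pencil_eq hv hκ' hvκ' hsub', hHfd.pencil_eq hv hκ hvκ hsub]
  · rintro κ ⟨hκ, v, hv, hvκ, hsub⟩
    exact ⟨v, ⟨hv, κ, hκ, hvκ, hsub⟩, hvκ, hsub⟩
end

section
/- Let H be a pencilled hfd line set in PG(5,K). Then H has at least one carrier plane, and H has at least two distinct vertices (i.e. there exist distinct 1-dimensional subspaces v₁ ≠ v₂ of V, each of which is the vertex of some pencil entirely contained in H). -/
/-!
Every nonzero vector `w` is non-conjugate to some singular point `x`, so the tangent hyperplane
`π₅(x)` misses `w`. The member of `H` in `π₅(x)` contains the vertex of its pencil, which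
therefore differs from `⟨w⟩`. Taking `⟨w⟩` to be a vertex of `H` gives a second vertex.
-/

section

variable {K : Type*} [Field K]

lemma kleinQ_single (j : Fin 6) (c : K) : kleinQ (Pi.single j c) = 0 := by
  fin_cases j <;> simp [kleinQ]

lemma exists_singular_kleinB_ne_zero {w : Fin 6 → K} (hw : w ≠ 0) :
    ∃ x : Fin 6 → K, x ≠ 0 ∧ kleinQ x = 0 ∧ kleinB x w ≠ 0 := by
  obtain ⟨i, hi⟩ := Function.ne_iff.mp hw
  -- `kleinB (Pi.single j 1) w` is the coordinate of `w` paired with `j` in `kleinQ`.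
  obtain ⟨j, hj⟩ : ∃ j, kleinB (Pi.single j 1) w = w i := by
    fin_cases i <;> [exists 1; exists 0; exists 3; exists 2; exists 5; exists 4] <;>
      simp [kleinB, kleinQ] <;> ring
  exact ⟨Pi.single j 1, by simp, kleinQ_single j 1, hj ▸ hi⟩

lemma IsHfd.exists_mem_le_kleinPolar {H : Set (Submodule K (Fin 6 → K))} (hH : IsHfd H)
    {x : Fin 6 → K} (hx : x ≠ 0) (hQx : kleinQ x = 0) :
    ∃ G ∈ H, G ≤ kleinPolar (Submodule.span K {x}) :=
  let ⟨G, hG, _⟩ := hH.2 _ ⟨x, hx, hQx, rfl⟩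
  ⟨G, hG⟩

lemma IsHfd.nonempty {H : Set (Submodule K (Fin 6 → K))} (hH : IsHfd H) : H.Nonempty :=
  let ⟨G, hG, _⟩ := hH.exists_mem_le_kleinPolar (x := Pi.single 0 1) (by simp)
    (kleinQ_single 0 1)
  ⟨G, hG⟩

namespace IsPencilledHfd

variable {H : Set (Submodule K (Fin 6 → K))} (hH : IsPencilledHfd H)
include hH

lemma exists_isVertex_le {G : Submodule K (Fin 6 → K)} (hG : G ∈ H) :
    ∃ v, IsVertex H v ∧ v ≤ G :=
  let ⟨v, κ, hv, hκ, hvκ, hsub, _, hvG, _⟩ := hH.2 G hG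
  ⟨v, ⟨hv, κ, hκ, hvκ, hsub⟩, hvG⟩

lemma exists_isVertex : ∃ v, IsVertex H v :=
  let ⟨_, hG⟩ := hH.1.nonempty
  let ⟨v, hv, _⟩ := hH.exists_isVertex_le hG
  ⟨v, hv⟩

lemma exists_isVertex_ne {p : Submodule K (Fin 6 → K)} (hp : p ≠ ⊥) :
    ∃ v, IsVertex H v ∧ v ≠ p := by
  obtain ⟨w, hwp, hw⟩ := Submodule.exists_mem_ne_zero_of_ne_bot hp
  obtain ⟨x, hx, hQx, hxw⟩ := exists_singular_kleinB_ne_zero hw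
  obtain ⟨G, hG, hGx⟩ := hH.1.exists_mem_le_kleinPolar hx hQx
  obtain ⟨v, hv, hvG⟩ := hH.exists_isVertex_le hG
  refine ⟨v, hv, fun hvp => hxw ?_⟩
  exact hGx (hvG (hvp ▸ hwp)) x (Submodule.mem_span_singleton_self x)

end IsPencilledHfd

lemma IsVertex.ne_bot {H : Set (Submodule K (Fin 6 → K))} {v : Submodule K (Fin 6 → K)}
    (hv : IsVertex H v) : v ≠ ⊥ := by
  rintro rfl
  simp [IsVertex] at hv

lemma IsVertex.exists_isCarrier {H : Set (Submodule K (Fin 6 → K))}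
    {v : Submodule K (Fin 6 → K)} (hv : IsVertex H v) : ∃ κ, IsCarrier H κ :=
  let ⟨κ, hκ, hvκ, hsub⟩ := hv.2
  ⟨κ, hκ, v, hv.1, hvκ, hsub⟩

end

/-- Lemma 4.5.
A pencilled hfd line set has at least one carrier plane and at least two distinct
vertices. -/
theorem carrier_and_two_vertices {K : Type*} [Field K]
    (H : Set (Submodule K (Fin 6 → K))) (hH : IsPencilledHfd H) :
    (∃ κ : Submodule K (Fin 6 → K), IsCarrier H κ) ∧
    (∃ v₁ v₂ : Submodule K (Fin 6 → K),
      IsVertex H v₁ ∧ IsVertex H v₂ ∧ v₁ ≠ v₂) := by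
  obtain ⟨v₁, hv₁⟩ := hH.exists_isVertex
  obtain ⟨v₂, hv₂, hne⟩ := hH.exists_isVertex_ne hv₁.ne_bot
  exact ⟨hv₁.exists_isCarrier, v₁, v₂, hv₁, hv₂, hne.symm⟩
end

section
/- Let H be a pencilled hfd line set in PG(5,K) and let L[v₁,κ₁] and L[v₂,κ₂] be two distinct pencils of lines, both entirely contained in H. Then: (i) v₁ ≠ v₂; (ii) the line v₁ + v₂ is contained in κ₁ ∩ κ₂; and (iii) v₁ + v₂ ∈ H. -/
/-!
A tangent hyperplane `x^⊥` through both vertices meets each carrier plane in a line of the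
corresponding pencil; as it contains only one member of `H`, that line is shared by the two
pencils. If `v₁ ≠ v₂`, a singular `x ⊥ v₁ ⊔ v₂` exists (the Klein quadric contains planes), and
the shared line is then `v₁ ⊔ v₂`. If `v₁ = v₂ = v` with `κ₁ ≠ κ₂`, the shared line is
`κ₁ ∩ κ₂` for every singular `x ∈ v^⊥`, so all singular vectors of `v^⊥` lie in its hyperplane
`(κ₁ ∩ κ₂)^⊥`. That forces every totally singular subspace of `v^⊥` into `(v^⊥)^⊥ = v`, which is
absurd since `v^⊥` meets a totally singular plane in dimension at least `2`.
-/

open Module Submodule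

namespace Submodule

variable {K V : Type*} [Field K] [AddCommGroup V] [Module K V] [FiniteDimensional K V]

theorem exists_le_le_finrank_eq_succ {v M : Submodule K V} {n : ℕ} (hv : finrank K v = n)
    (hvM : v ≤ M) (hM : n < finrank K M) :
    ∃ G : Submodule K V, finrank K G = n + 1 ∧ v ≤ G ∧ G ≤ M := by
  obtain ⟨w, hwM, hwv⟩ := SetLike.not_le_iff_exists.mp fun hMv : M ≤ v =>
    (finrank_mono hMv).not_gt (hv ▸ hM)
  have hw : w ≠ 0 := by rintro rfl; exact hwv v.zero_mem
  have hlt : v < v ⊔ K ∙ w :=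
    SetLike.lt_iff_le_and_exists.mpr
      ⟨le_sup_left, w, mem_sup_right (mem_span_singleton_self w), hwv⟩
  have hle := finrank_add_le_finrank_add_finrank v (K ∙ w)
  rw [finrank_span_singleton hw] at hle
  have := finrank_lt_finrank_of_lt hlt
  exact ⟨v ⊔ K ∙ w, by omega, le_sup_left, sup_le hvM ((span_singleton_le_iff_mem w M).mpr hwM)⟩

theorem finrank_add_finrank_le_finrank_inf_add (p q : Submodule K V) :
    finrank K p + finrank K q ≤ finrank K (p ⊓ q : Submodule K V) + finrank K V := by
  have := finrank_sup_add_finrank_inf_eq p q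
  have := (p ⊔ q).finrank_le
  omega

theorem finrank_inf_lt_of_ne {p q : Submodule K V} (h : finrank K p = finrank K q) (hpq : p ≠ q) :
    finrank K (p ⊓ q : Submodule K V) < finrank K p := by
  refine finrank_lt_finrank_of_lt (inf_le_left.lt_of_ne fun hp => hpq ?_)
  exact eq_of_le_of_finrank_le (hp ▸ inf_le_right) h.ge

theorem finrank_sup_eq_two {p q : Submodule K V} (hp : finrank K p = 1) (hq : finrank K q = 1)
    (hpq : p ≠ q) : finrank K (p ⊔ q : Submodule K V) = 2 := by
  have := finrank_inf_lt_of_ne (hp.trans hq.symm) hpq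
  have := finrank_sup_add_finrank_inf_eq p q
  omega

end Submodule

namespace QuadraticMap

variable {K V : Type*} [Field K] [AddCommGroup V] [Module K V] {Q : QuadraticForm K V}

theorem isRefl_polarBilin : LinearMap.BilinForm.IsRefl Q.polarBilin := fun x y h => by
  rwa [polarBilin_apply_apply, polar_comm]

theorem le_orthogonal_of_isotropic_mem {P U W : Submodule K V} (hWP : W ≤ P)
    (hW : ∀ w ∈ W, Q w = 0) (hU : ∀ x ∈ P, Q x = 0 → x ∈ U) (hPU : ¬ P ≤ U) :
    W ≤ LinearMap.BilinForm.orthogonal Q.polarBilin P := by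
  have hWU : ∀ w ∈ W, w ∈ U := fun w hw => hU w (hWP hw) (hW w hw)
  -- if `polar Q y w ≠ 0`, a suitable multiple `c • w` makes `y + c • w` isotropic
  have outside : ∀ y ∈ P, y ∉ U → ∀ w ∈ W, polar Q y w = 0 := by
    intro y hyP hyU w hw
    by_contra hyw
    have hiso : Q (y + (-Q y / polar Q y w) • w) = 0 := by
      rw [QuadraticMap.map_add (⇑Q), QuadraticMap.map_smul, hW w hw, polar_smul_right, smul_eq_mul,
        smul_eq_mul, div_mul_cancel₀ _ hyw]
      ring
    have hcw := U.smul_mem (-Q y / polar Q y w) (hWU w hw)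
    have := hU _ (P.add_mem hyP (hWP (W.smul_mem _ hw))) hiso
    exact hyU (by simpa using U.sub_mem this hcw)
  obtain ⟨y₀, hy₀P, hy₀U⟩ := SetLike.not_le_iff_exists.mp hPU
  intro w hw z hzP
  show polar Q z w = 0
  by_cases hzU : z ∈ U
  · have hsum := outside (y₀ + z) (P.add_mem hy₀P hzP)
      (fun h => hy₀U (by simpa using U.sub_mem h hzU)) w hw
    rwa [polar_add_left, outside y₀ hy₀P hy₀U w hw, zero_add] at hsum
  · exact outside z hzP hzU w hw

end QuadraticMap

section Klein

variable {K : Type*} [Field K]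

def kleinForm (K : Type*) [Field K] : QuadraticForm K (Fin 6 → K) :=
  QuadraticMap.ofPolar kleinQ
    (fun a x => by
      simp only [kleinQ, Pi.smul_apply, smul_eq_mul]
      ring)
    (fun x x' y => by
      simp only [QuadraticMap.polar, kleinQ, Pi.add_apply]
      ring)
    (fun a x y => by
      simp only [QuadraticMap.polar, kleinQ, Pi.add_apply, Pi.smul_apply, smul_eq_mul]
      ring)

theorem kleinPolar_eq_orthogonal (S : Submodule K (Fin 6 → K)) :
    kleinPolar S = LinearMap.BilinForm.orthogonal (kleinForm K).polarBilin S :=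
  Submodule.ext fun _ => Iff.rfl

theorem polar_kleinForm (x y : Fin 6 → K) : QuadraticMap.polar (kleinForm K) x y =
    x 0 * y 1 + x 1 * y 0 + x 2 * y 3 + x 3 * y 2 + x 4 * y 5 + x 5 * y 4 := by
  simp only [QuadraticMap.polar, kleinForm, QuadraticMap.ofPolar_apply, kleinQ, Pi.add_apply]
  ring

theorem nondegenerate_polarBilin_kleinForm : (kleinForm K).polarBilin.Nondegenerate := by
  refine (LinearMap.IsRefl.nondegenerate_iff_separatingLeft (B := (kleinForm K).polarBilin)
    QuadraticMap.isRefl_polarBilin).mpr fun x hx => ?_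
  have h := fun j => hx (Pi.single j 1)
  simp only [QuadraticMap.polarBilin_apply_apply, polar_kleinForm] at h
  funext i
  fin_cases i <;> simp_all [Fin.forall_fin_succ]

theorem finrank_kleinPolar (S : Submodule K (Fin 6 → K)) :
    finrank K (kleinPolar S) = 6 - finrank K S := by
  rw [kleinPolar_eq_orthogonal, LinearMap.BilinForm.finrank_orthogonal
    nondegenerate_polarBilin_kleinForm, finrank_fin_fun]

theorem kleinPolar_kleinPolar (S : Submodule K (Fin 6 → K)) : kleinPolar (kleinPolar S) = S := by
  rw [kleinPolar_eq_orthogonal, kleinPolar_eq_orthogonal]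
  exact LinearMap.BilinForm.orthogonal_orthogonal nondegenerate_polarBilin_kleinForm
    QuadraticMap.isRefl_polarBilin S

theorem kleinPolar_antitone {S T : Submodule K (Fin 6 → K)} (h : S ≤ T) :
    kleinPolar T ≤ kleinPolar S :=
  fun _ hy s hs => hy s (h hs)

theorem le_kleinPolar_comm {S T : Submodule K (Fin 6 → K)} :
    S ≤ kleinPolar T ↔ T ≤ kleinPolar S :=
  ⟨fun h => kleinPolar_kleinPolar T ▸ kleinPolar_antitone h,
    fun h => kleinPolar_kleinPolar S ▸ kleinPolar_antitone h⟩

theorem le_kleinPolar_span_singleton_iff {S : Submodule K (Fin 6 → K)} {x : Fin 6 → K} :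
    S ≤ kleinPolar (K ∙ x) ↔ x ∈ kleinPolar S := by
  rw [le_kleinPolar_comm, span_singleton_le_iff_mem]

theorem exists_totallySingular_finrank_eq_three :
    ∃ T : Submodule K (Fin 6 → K), finrank K T = 3 ∧ ∀ x ∈ T, kleinQ x = 0 := by
  let e : Fin 3 → Fin 6 := ![0, 2, 4]
  refine ⟨span K (Set.range (Pi.basisFun K (Fin 6) ∘ e)), ?_, fun x hx => ?_⟩
  · rw [finrank_span_eq_card ((Pi.basisFun K (Fin 6)).linearIndependent.comp e (by decide)),
      Fintype.card_fin]
  · obtain ⟨c, rfl⟩ := (mem_span_range_iff_exists_fun K).mp hx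
    simp [kleinQ, Fin.sum_univ_three, e, Pi.single_apply]

theorem exists_totallySingular_le (P : Submodule K (Fin 6 → K)) :
    ∃ W ≤ P, (∀ w ∈ W, kleinQ w = 0) ∧ finrank K P ≤ finrank K W + 3 := by
  obtain ⟨T, hT, hTQ⟩ := exists_totallySingular_finrank_eq_three (K := K)
  have := finrank_add_finrank_le_finrank_inf_add T P
  rw [finrank_fin_fun] at this
  exact ⟨T ⊓ P, inf_le_right, fun w hw => hTQ w hw.1, by omega⟩

theorem exists_ne_zero_kleinQ_eq_zero {P : Submodule K (Fin 6 → K)} (hP : 4 ≤ finrank K P) :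
    ∃ x ∈ P, x ≠ 0 ∧ kleinQ x = 0 := by
  obtain ⟨W, hWP, hWQ, hW⟩ := exists_totallySingular_le P
  obtain ⟨x, hxW, hx⟩ := exists_mem_ne_zero_of_ne_bot fun h : W = ⊥ => by
    rw [h, finrank_bot] at hW
    omega
  exact ⟨x, hWP hxW, hx, hWQ x hxW⟩

theorem IsTangentHyperplane.finrank_eq {τ : Submodule K (Fin 6 → K)}
    (hτ : IsTangentHyperplane τ) : finrank K τ = 5 := by
  obtain ⟨x, hx, -, rfl⟩ := hτ
  rw [finrank_kleinPolar, finrank_span_singleton hx]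

theorem exists_mem_pencil_le {v κ τ : Submodule K (Fin 6 → K)} (hv : finrank K v = 1)
    (hκ : finrank K κ = 3) (hvκ : v ≤ κ) (hτ : finrank K τ = 5) (hvτ : v ≤ τ) :
    ∃ G ∈ pencil v κ, G ≤ τ := by
  have := finrank_add_finrank_le_finrank_inf_add κ τ
  rw [finrank_fin_fun] at this
  obtain ⟨G, hG, hvG, hGκτ⟩ := exists_le_le_finrank_eq_succ hv (le_inf hvκ hvτ) (by omega)
  exact ⟨G, ⟨hG, hvG, hGκτ.trans inf_le_left⟩, hGκτ.trans inf_le_right⟩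

variable {H : Set (Submodule K (Fin 6 → K))} {v₁ κ₁ v₂ κ₂ τ : Submodule K (Fin 6 → K)}

theorem IsHfd.exists_mem_pencil_inter_le (hH : IsHfd H) (hv₁ : finrank K v₁ = 1)
    (hκ₁ : finrank K κ₁ = 3) (h₁ : v₁ ≤ κ₁) (hv₂ : finrank K v₂ = 1) (hκ₂ : finrank K κ₂ = 3)
    (h₂ : v₂ ≤ κ₂) (hpen₁ : pencil v₁ κ₁ ⊆ H) (hpen₂ : pencil v₂ κ₂ ⊆ H)
    (hτ : IsTangentHyperplane τ) (hv₁τ : v₁ ≤ τ) (hv₂τ : v₂ ≤ τ) :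
    ∃ G ∈ pencil v₁ κ₁ ∩ pencil v₂ κ₂, G ≤ τ := by
  obtain ⟨G₁, hG₁, hG₁τ⟩ := exists_mem_pencil_le hv₁ hκ₁ h₁ hτ.finrank_eq hv₁τ
  obtain ⟨G₂, hG₂, hG₂τ⟩ := exists_mem_pencil_le hv₂ hκ₂ h₂ hτ.finrank_eq hv₂τ
  obtain ⟨G, -, hG⟩ := hH.2 τ hτ
  have hG₁₂ : G₁ = G₂ := (hG G₁ ⟨hpen₁ hG₁, hG₁τ⟩).trans (hG G₂ ⟨hpen₂ hG₂, hG₂τ⟩).symm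
  exact ⟨G₁, ⟨hG₁, hG₁₂ ▸ hG₂⟩, hG₁τ⟩

theorem IsHfd.eq_of_pencil_subset {v : Submodule K (Fin 6 → K)} (hH : IsHfd H)
    (hv : finrank K v = 1) (hκ₁ : finrank K κ₁ = 3) (h₁ : v ≤ κ₁) (hκ₂ : finrank K κ₂ = 3)
    (h₂ : v ≤ κ₂) (hpen₁ : pencil v κ₁ ⊆ H) (hpen₂ : pencil v κ₂ ⊆ H) : κ₁ = κ₂ := by
  by_contra hne
  have hL : finrank K (κ₁ ⊓ κ₂ : Submodule K (Fin 6 → K)) < 3 :=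
    hκ₁ ▸ finrank_inf_lt_of_ne (hκ₁.trans hκ₂.symm) hne
  have hsingular : ∀ x ∈ kleinPolar v, kleinQ x = 0 → x ≠ 0 →
      finrank K (κ₁ ⊓ κ₂ : Submodule K (Fin 6 → K)) = 2 ∧ x ∈ kleinPolar (κ₁ ⊓ κ₂) := by
    intro x hxv hxQ hx
    have hvτ : v ≤ kleinPolar (K ∙ x) := le_kleinPolar_span_singleton_iff.mpr hxv
    obtain ⟨G, ⟨hG₁, hG₂⟩, hGτ⟩ := hH.exists_mem_pencil_inter_le hv hκ₁ h₁ hv hκ₂ h₂ hpen₁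
      hpen₂ ⟨x, hx, hxQ, rfl⟩ hvτ hvτ
    have hGL : G = κ₁ ⊓ κ₂ := eq_of_le_of_finrank_le (le_inf hG₁.2.2 hG₂.2.2) (hG₁.1 ▸ by omega)
    exact ⟨hGL ▸ hG₁.1, le_kleinPolar_span_singleton_iff.mp (hGL ▸ hGτ)⟩
  have hP := finrank_kleinPolar v
  rw [hv] at hP
  obtain ⟨x, hxv, hx, hxQ⟩ := exists_ne_zero_kleinQ_eq_zero (P := kleinPolar v) (by omega)
  have hL2 := (hsingular x hxv hxQ hx).1
  have hPU : ¬ kleinPolar v ≤ kleinPolar (κ₁ ⊓ κ₂) := fun h => by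
    have := finrank_mono h
    rw [hP, finrank_kleinPolar, hL2] at this
    omega
  obtain ⟨W, hWP, hWQ, hW⟩ := exists_totallySingular_le (kleinPolar v)
  have hWv : W ≤ v := by
    have := QuadraticMap.le_orthogonal_of_isotropic_mem (Q := kleinForm K) hWP hWQ
      (fun x hxP hxQ => by
        rcases eq_or_ne x 0 with rfl | hx
        · exact zero_mem _
        · exact (hsingular x hxP hxQ hx).2) hPU
    rwa [← kleinPolar_eq_orthogonal, kleinPolar_kleinPolar] at this
  have := finrank_mono hWv
  rw [hP] at hW
  omega

theorem IsHfd.sup_mem_pencil_inter (hH : IsHfd H) (hv₁ : finrank K v₁ = 1)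
    (hκ₁ : finrank K κ₁ = 3) (h₁ : v₁ ≤ κ₁) (hv₂ : finrank K v₂ = 1) (hκ₂ : finrank K κ₂ = 3)
    (h₂ : v₂ ≤ κ₂) (hpen₁ : pencil v₁ κ₁ ⊆ H) (hpen₂ : pencil v₂ κ₂ ⊆ H) (hv : v₁ ≠ v₂) :
    v₁ ⊔ v₂ ∈ pencil v₁ κ₁ ∩ pencil v₂ κ₂ := by
  have hL := finrank_sup_eq_two hv₁ hv₂ hv
  have hP := finrank_kleinPolar (v₁ ⊔ v₂)
  rw [hL] at hP
  obtain ⟨x, hxL, hx, hxQ⟩ :=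
    exists_ne_zero_kleinQ_eq_zero (P := kleinPolar (v₁ ⊔ v₂)) (by omega)
  have hLτ : v₁ ⊔ v₂ ≤ kleinPolar (K ∙ x) := le_kleinPolar_span_singleton_iff.mpr hxL
  obtain ⟨G, hG, -⟩ := hH.exists_mem_pencil_inter_le hv₁ hκ₁ h₁ hv₂ hκ₂ h₂ hpen₁ hpen₂
    ⟨x, hx, hxQ, rfl⟩ (le_sup_left.trans hLτ) (le_sup_right.trans hLτ)
  have hLG : v₁ ⊔ v₂ = G := eq_of_le_of_finrank_le (sup_le hG.1.2.1 hG.2.2.1) (hG.1.1 ▸ hL.ge)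
  exact hLG ▸ hG

end Klein

/-- Lemma 4.8.
For two distinct pencils `L[v₁,κ₁]`, `L[v₂,κ₂]` contained in a pencilled hfd line
set `H` one has `v₁ ≠ v₂`, the line `v₁ ⊔ v₂` lies in `κ₁ ⊓ κ₂`, and
`v₁ ⊔ v₂ ∈ H`. -/
theorem two_pencils {K : Type*} [Field K]
    (H : Set (Submodule K (Fin 6 → K))) (hH : IsPencilledHfd H)
    (v₁ κ₁ v₂ κ₂ : Submodule K (Fin 6 → K))
    (hv₁ : Module.finrank K v₁ = 1) (hκ₁ : Module.finrank K κ₁ = 3) (h₁ : v₁ ≤ κ₁)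
    (hv₂ : Module.finrank K v₂ = 1) (hκ₂ : Module.finrank K κ₂ = 3) (h₂ : v₂ ≤ κ₂)
    (hpen₁ : pencil v₁ κ₁ ⊆ H) (hpen₂ : pencil v₂ κ₂ ⊆ H)
    (hne : (v₁, κ₁) ≠ (v₂, κ₂)) :
    v₁ ≠ v₂ ∧ (v₁ ⊔ v₂ : Submodule K (Fin 6 → K)) ≤ κ₁ ⊓ κ₂ ∧
      (v₁ ⊔ v₂ : Submodule K (Fin 6 → K)) ∈ H := by
  have hv : v₁ ≠ v₂ := by
    rintro rfl
    exact hne (congrArg (Prod.mk v₁) (hH.1.eq_of_pencil_subset hv₁ hκ₁ h₁ hκ₂ h₂ hpen₁ hpen₂))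
  obtain ⟨hL₁, hL₂⟩ := hH.1.sup_mem_pencil_inter hv₁ hκ₁ h₁ hv₂ hκ₂ h₂ hpen₁ hpen₂ hv
  exact ⟨hv, le_inf hL₁.2.2 hL₂.2.2, hpen₁ hL₁⟩
end
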